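/- Let X be the completion of c00 with norm ‖x‖_X = (Σ_{m=1}^∞ α_m ‖x²‖_{V,m})^{1/2} (the 2-convexification of V'). Then for every n ∈ ℕ, every I ∈ S_n with |I| ≥ 1, every choice of indices (k_i)_{i∈I} with n ≤ k_i and k_i pairwise distinct, and every (x_i)_{i∈I} ⊂ (0,1) with Σ_{i∈I} x_i² = 1, one has ‖Σ_{i∈I} x_i e_{k_i}‖_X ≥ √θ_n, provided that the supports {k_i} form an S_n-allowable family. -/

import Mathlib

/-- The Schreier classes `S_n` of finite subsets of `ℕ`:
`S_0` consists of singletons and the empty set, and `F ∈ S_{n+1}` iff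
`F = F_1 ∪ ⋯ ∪ F_k` where `k ≤ F_1 < F_2 < ⋯ < F_k` and each `F_i ∈ S_n`
(the empty set is allowed in every class). -/
inductive Schreier : ℕ → Finset ℕ → Prop
  | empty (n : ℕ) : Schreier n ∅
  | singleton (m : ℕ) : Schreier 0 {m}
  | union (n : ℕ) (L : List (Finset ℕ))
      (hmem : ∀ F ∈ L, Schreier n F)
      (hchain : L.Chain' (fun E F => ∀ a ∈ E, ∀ b ∈ F, a < b))
      (hlen : ∀ F ∈ L, ∀ a ∈ F, L.length ≤ a) :
      Schreier (n + 1) (L.foldr (· ∪ ·) ∅)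

/-- A family of finitely supported vectors is `S_k`-allowable: the supports are
nonempty and pairwise disjoint, and the set of minima of the supports is in `S_k`. -/
def Allowable (k : ℕ) {r : ℕ} (x : Fin r → (ℕ →₀ ℝ)) : Prop :=
  (∀ i, (x i).support.Nonempty) ∧
  (∀ i j, i ≠ j → Disjoint (x i).support (x j).support) ∧
  Schreier k (Finset.image (fun i => ((x i).support.min.getD 0)) Finset.univ)

/-- A family of finite sets is `S_k`-allowable: nonempty, pairwise disjoint,
with the set of minima in `S_k`. -/
def AllowableSets (k : ℕ) {r : ℕ} (E : Fin r → Finset ℕ) : Prop :=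
  (∀ i, (E i).Nonempty) ∧
  (∀ i j, i ≠ j → Disjoint (E i) (E j)) ∧
  Schreier k (Finset.image (fun i => ((E i).min.getD 0)) Finset.univ)

/-- `N` is the sequence of norms `‖·‖_{V,m}` on `c₀₀`:
`N 0 x = ‖x‖_∞` and `N (m+1) x` is the supremum of `‖x‖_∞` together with all
`θ_k · Σ_i ‖E_i x‖_{V,m}` over `k ≥ 1` and `S_k`-allowable families `(E_i)`. -/
def VNormRec (θ : ℕ → ℝ) (N : ℕ → (ℕ →₀ ℝ) → ℝ) : Prop :=
  (∀ x : ℕ →₀ ℝ, N 0 x = ⨆ j, |x j|) ∧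
  (∀ (m : ℕ) (x : ℕ →₀ ℝ),
    IsLUB ({⨆ j, |x j|} ∪
      {y : ℝ | ∃ k, 1 ≤ k ∧ ∃ r, ∃ E : Fin r → Finset ℕ, AllowableSets k E ∧
        y = θ k * ∑ i, N m (x.filter (· ∈ E i))})
      (N (m + 1) x))

/-- Coordinatewise square. -/
noncomputable def fsq (x : ℕ →₀ ℝ) : ℕ →₀ ℝ :=
  Finsupp.mapRange (fun t => t ^ 2) (by norm_num) x

/-!
For `s = {k_i} ∈ S_n` the singletons `{k_i}` form an `S_n`-allowable family, so
`‖z‖_{V,m+1} ≥ θ_n Σ_i |z_{k_i}|` for every `m`. Applied to `z = (Σ x_i e_{k_i})²`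
this gives `‖z‖_{V,m+1} ≥ θ_n Σ x_i² = θ_n`, hence the `α`-average of these norms
is at least `θ_n`. The average converges because every `‖·‖_{V,m}` is dominated by
the `ℓ₁`-norm, as `θ_k ≤ 1`.
-/

open Finset

section l1Norm

variable {ι : Type*}

noncomputable def l1Norm (x : ι →₀ ℝ) : ℝ := ∑ j ∈ x.support, |x j|

lemma abs_apply_le_l1Norm (x : ι →₀ ℝ) (a : ι) : |x a| ≤ l1Norm x := by
  by_cases ha : a ∈ x.support
  · exact single_le_sum (f := fun j => |x j|) (fun j _ => abs_nonneg _) ha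
  · rw [Finsupp.notMem_support_iff.mp ha, abs_zero]
    exact sum_nonneg fun j _ => abs_nonneg (x j)

lemma bddAbove_range_abs (x : ι →₀ ℝ) : BddAbove (Set.range fun j => |x j|) :=
  ⟨l1Norm x, Set.forall_mem_range.2 (abs_apply_le_l1Norm x)⟩

lemma iSup_abs_le_l1Norm [Nonempty ι] (x : ι →₀ ℝ) : (⨆ j, |x j|) ≤ l1Norm x :=
  ciSup_le (abs_apply_le_l1Norm x)

lemma l1Norm_filter (x : ι →₀ ℝ) (p : ι → Prop) [DecidablePred p] :
    l1Norm (x.filter p) = ∑ j ∈ x.support with p j, |x j| := by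
  rw [l1Norm, Finsupp.support_filter]
  exact sum_congr rfl fun j hj => by rw [Finsupp.filter_apply, if_pos (mem_filter.mp hj).2]

lemma sum_l1Norm_filter_le [DecidableEq ι] {r : ℕ} (x : ι →₀ ℝ) (E : Fin r → Finset ι)
    (hE : ∀ i j, i ≠ j → Disjoint (E i) (E j)) :
    ∑ i, l1Norm (x.filter (· ∈ E i)) ≤ l1Norm x := by
  simp_rw [l1Norm_filter]
  have hdisj : ((univ : Finset (Fin r)) : Set (Fin r)).PairwiseDisjoint
      fun i => x.support.filter (· ∈ E i) := fun i _ j _ hij =>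
    disjoint_filter.2 fun _ _ hi hj => disjoint_left.1 (hE i j hij) hi hj
  rw [← sum_biUnion hdisj]
  exact sum_le_sum_of_subset_of_nonneg (biUnion_subset.2 fun i _ => filter_subset _ _)
    fun j _ _ => abs_nonneg _

end l1Norm

noncomputable def singletonFamily (s : Finset ℕ) : Fin s.card → Finset ℕ :=
  fun i => {(s.equivFin.symm i : ℕ)}

lemma allowableSets_singletonFamily_iff {k : ℕ} {s : Finset ℕ} :
    AllowableSets k (singletonFamily s) ↔ Schreier k s := by
  have hmin : image (fun i => (singletonFamily s i).min.getD 0) univ = s := by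
    ext a
    simp only [singletonFamily, min_singleton, mem_image, mem_univ, true_and]
    exact ⟨fun ⟨i, hi⟩ => hi ▸ (s.equivFin.symm i).2,
      fun ha => ⟨s.equivFin ⟨a, ha⟩, by simp; rfl⟩⟩
  rw [AllowableSets, hmin]
  refine ⟨fun h => h.2.2, fun h => ⟨fun i => singleton_nonempty _, ?_, h⟩⟩
  intro i j hij
  simpa [singletonFamily, Subtype.ext_iff] using hij

namespace VNormRec

variable {θ : ℕ → ℝ} {N : ℕ → (ℕ →₀ ℝ) → ℝ}

lemma iSup_abs_le (hrec : VNormRec θ N) (m : ℕ) (x : ℕ →₀ ℝ) : (⨆ j, |x j|) ≤ N m x := by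
  cases m with
  | zero => exact (hrec.1 x).ge
  | succ m => exact (hrec.2 m x).1 (Or.inl rfl)

lemma abs_apply_le (hrec : VNormRec θ N) (m : ℕ) (x : ℕ →₀ ℝ) (a : ℕ) : |x a| ≤ N m x :=
  (le_ciSup (bddAbove_range_abs x) a).trans (hrec.iSup_abs_le m x)

lemma nonneg (hrec : VNormRec θ N) (m : ℕ) (x : ℕ →₀ ℝ) : 0 ≤ N m x :=
  (abs_nonneg _).trans (hrec.abs_apply_le m x 0)

lemma mul_sum_le {k r : ℕ} {E : Fin r → Finset ℕ} (hrec : VNormRec θ N) (hk : 1 ≤ k)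
    (hE : AllowableSets k E) (m : ℕ) (x : ℕ →₀ ℝ) :
    θ k * ∑ i, N m (x.filter (· ∈ E i)) ≤ N (m + 1) x :=
  (hrec.2 m x).1 (Or.inr ⟨k, hk, r, E, hE, rfl⟩)

lemma le_l1Norm (hrec : VNormRec θ N) (hθ : ∀ k, θ k ≤ 1) (m : ℕ) (x : ℕ →₀ ℝ) :
    N m x ≤ l1Norm x := by
  induction m generalizing x with
  | zero => exact (hrec.1 x).trans_le (iSup_abs_le_l1Norm x)
  | succ m ih =>
    refine (hrec.2 m x).2 ?_
    rintro y (rfl | ⟨k, -, r, E, hE, rfl⟩)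
    · exact iSup_abs_le_l1Norm x
    · have hsum_nonneg : 0 ≤ ∑ i, N m (x.filter (· ∈ E i)) :=
        sum_nonneg fun i _ => hrec.nonneg m _
      calc θ k * ∑ i, N m (x.filter (· ∈ E i))
          ≤ ∑ i, N m (x.filter (· ∈ E i)) := mul_le_of_le_one_left hsum_nonneg (hθ k)
        _ ≤ ∑ i, l1Norm (x.filter (· ∈ E i)) := sum_le_sum fun i _ => ih _
        _ ≤ l1Norm x := sum_l1Norm_filter_le x E hE.2.1

lemma mul_sum_abs_le_of_schreier {k : ℕ} {s : Finset ℕ} (hrec : VNormRec θ N) (hk : 1 ≤ k)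
    (hθk : 0 ≤ θ k) (hs : Schreier k s) (m : ℕ) (x : ℕ →₀ ℝ) :
    θ k * ∑ j ∈ s, |x j| ≤ N (m + 1) x := by
  have hsum : ∑ j ∈ s, |x j| = ∑ i, |x (s.equivFin.symm i)| := by
    rw [← sum_coe_sort s, Equiv.sum_comp s.equivFin.symm (fun j => |x j|)]
  have hterm (i : Fin s.card) :
      |x (s.equivFin.symm i)| ≤ N m (x.filter (· ∈ singletonFamily s i)) := by
    simpa [singletonFamily] using hrec.abs_apply_le m (x.filter (· ∈ singletonFamily s i))
      (s.equivFin.symm i)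
  calc θ k * ∑ j ∈ s, |x j|
      ≤ θ k * ∑ i, N m (x.filter (· ∈ singletonFamily s i)) := by
        rw [hsum]; gcongr with i; exact hterm i
    _ ≤ N (m + 1) x := hrec.mul_sum_le hk (allowableSets_singletonFamily_iff.2 hs) m x

end VNormRec

lemma le_tsum_mul_of_forall_le {β : Type*} {w f : β → ℝ} {c C : ℝ} (hw : ∀ b, 0 ≤ w b)
    (hw1 : ∑' b, w b = 1) (hc : ∀ b, c ≤ f b) (hC : ∀ b, |f b| ≤ C) :
    c ≤ ∑' b, w b * f b := by
  have hws : Summable w := by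
    by_contra h
    rw [tsum_eq_zero_of_not_summable h] at hw1
    exact zero_ne_one hw1
  have hwf : Summable fun b => w b * f b := (hws.mul_right C).of_norm_bounded fun b => by
    rw [Real.norm_eq_abs, abs_mul, abs_of_nonneg (hw b)]
    exact mul_le_mul_of_nonneg_left (hC b) (hw b)
  calc c = ∑' b, w b * c := by rw [tsum_mul_right, hw1, one_mul]
    _ ≤ ∑' b, w b * f b :=
      (hws.mul_right c).tsum_le_tsum (fun b => mul_le_mul_of_nonneg_left (hc b) (hw b)) hwf

lemma finsetSum_smul_single_one_apply_of_injOn {ι κ R : Type*} [Semiring R] {I : Finset ι}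
    {k : ι → κ} (hk : Set.InjOn k I) (x : ι → R) {i : ι} (hi : i ∈ I) :
    (∑ j ∈ I, x j • Finsupp.single (k j) (1 : R)) (k i) = x i := by
  rw [Finsupp.finsetSum_apply, sum_eq_single_of_mem i hi fun j hj hji => ?_]
  · simp
  · simp [hk.ne hj hi hji]

theorem two_conv_VPrime_lower_estimate_general
    (θ : ℕ → ℝ) (hθ : ∀ n, θ n ∈ Set.Ioo (0:ℝ) 1)
    (N : ℕ → (ℕ →₀ ℝ) → ℝ) (hrec : VNormRec θ N)
    (α : ℕ → ℝ) (hα : ∀ m, 0 < α m)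
    (hsum : ∑' m : ℕ, α (m + 1) = 1)
    (Xnorm : (ℕ →₀ ℝ) → ℝ)
    (hX : ∀ x, Xnorm x = Real.sqrt (∑' m : ℕ, α (m + 1) * N (m + 1) (fsq x))) :
    ∀ n : ℕ, 1 ≤ n → ∀ I : Finset ℕ, I.Nonempty → Schreier n I →
      ∀ k : ℕ → ℕ, Set.InjOn k I → (∀ i ∈ I, n ≤ k i) →
        Schreier n (I.image k) →
        ∀ x : ℕ → ℝ, (∀ i ∈ I, x i ∈ Set.Ioo (0:ℝ) 1) →
          (∑ i ∈ I, (x i) ^ 2 = 1) →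
          Real.sqrt (θ n) ≤ Xnorm (∑ i ∈ I, x i • Finsupp.single (k i) 1) := by
  intro n hn I _ _ k hk _ hSk x _ hx
  set y : ℕ →₀ ℝ := ∑ i ∈ I, x i • Finsupp.single (k i) 1
  have hmass : ∑ j ∈ I.image k, |fsq y j| = 1 := by
    rw [sum_image hk, ← hx]
    refine sum_congr rfl fun i hi => ?_
    rw [fsq, Finsupp.mapRange_apply, finsetSum_smul_single_one_apply_of_injOn hk x hi, abs_sq]
  have hlower (m : ℕ) : θ n ≤ N (m + 1) (fsq y) := by
    simpa [hmass] using hrec.mul_sum_abs_le_of_schreier hn (hθ n).1.le hSk m (fsq y)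
  have hupper (m : ℕ) : |N (m + 1) (fsq y)| ≤ l1Norm (fsq y) := by
    rw [abs_of_nonneg (hrec.nonneg _ _)]
    exact hrec.le_l1Norm (fun k => (hθ k).2.le) _ _
  rw [hX]
  exact Real.sqrt_le_sqrt (le_tsum_mul_of_forall_le (fun m => (hα _).le) hsum hlower hupper)

/-- Lower estimate in the 2-convexification of `V'` for `S_n`-allowable
normalized combinations of basis vectors. -/
theorem two_conv_VPrime_lower_estimate
    (θ : ℕ → ℝ) (hθ : ∀ n, θ n ∈ Set.Ioo (0:ℝ) 1)
    (hθ0 : Filter.Tendsto θ Filter.atTop (nhds 0))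
    (N : ℕ → (ℕ →₀ ℝ) → ℝ) (hrec : VNormRec θ N)
    (α : ℕ → ℝ) (hα : ∀ m, 0 < α m)
    (hsum : ∑' m : ℕ, α (m + 1) = 1)
    (Xnorm : (ℕ →₀ ℝ) → ℝ)
    (hX : ∀ x, Xnorm x = Real.sqrt (∑' m : ℕ, α (m + 1) * N (m + 1) (fsq x))) :
    ∀ n : ℕ, 1 ≤ n → ∀ I : Finset ℕ, I.Nonempty → Schreier n I →
      ∀ k : ℕ → ℕ, Set.InjOn k I → (∀ i ∈ I, n ≤ k i) →
        Schreier n (I.image k) →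
        ∀ x : ℕ → ℝ, (∀ i ∈ I, x i ∈ Set.Ioo (0:ℝ) 1) →
          (∑ i ∈ I, (x i) ^ 2 = 1) →
          Real.sqrt (θ n) ≤ Xnorm (∑ i ∈ I, x i • Finsupp.single (k i) 1) :=
  two_conv_VPrime_lower_estimate_general θ hθ N hrec α hα hsum Xnorm hX
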